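/- Let e ≥ 1 and j ≥ 2 be integers and set d := e + j. Suppose F ∈ R[x,z] satisfies deg_x F ≤ e, deg_z F ≤ 1, and q(x + j·z) − F lies in the ideal generated by Q_e(x) and Q_1(z). Then the coefficient of the monomial x^e·z in F equals ∂(∏_{l=0}^{j−1} (l·v + (d−l)·u)). -/

import Mathlib

noncomputable section

abbrev R2 : Type := MvPolynomial (Fin 2) ℚ

def uu : R2 := MvPolynomial.X 0
def vv : R2 := MvPolynomial.X 1

/-- The involution of `R2 = ℚ[u,v]` swapping `u` and `v`; `P*`. -/
def swapUV (P : R2) : R2 := MvPolynomial.rename (Equiv.swap (0 : Fin 2) 1) P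

/-- `Q_k(y) = ∏_{j=0}^{k} (y + j·u + (k−j)·v)` in `R2[y]`. -/
def Qp (k : ℕ) : Polynomial R2 :=
  ∏ j ∈ Finset.range (k + 1),
    (Polynomial.X + Polynomial.C ((j : R2) * uu + ((k - j : ℕ) : R2) * vv))

/-- `C_{d+1} = ∏_{j=0}^{d} (j·u + (d−j)·v)` in `R2`. -/
def Cdtop (d : ℕ) : R2 :=
  ∏ j ∈ Finset.range (d + 1), ((j : R2) * uu + ((d - j : ℕ) : R2) * vv)

/-- `Q_k(x_i)` as an element of `R2[x_1,…,x_r]`. -/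
def Qm (r k : ℕ) (i : Fin r) : MvPolynomial (Fin r) R2 :=
  ∏ j ∈ Finset.range (k + 1),
    (MvPolynomial.X i + MvPolynomial.C ((j : R2) * uu + ((k - j : ℕ) : R2) * vv))

/-!
Specialise `z` to the two roots `-u`, `-v` of `Q_1(z)`. Since `Q_e(y)` divides both
`Q_d(y - j u)` and `Q_d(y - j v)`, the relation `y q(y) = Q_d(y) - C_{d+1}` turns the hypothesis
into `(y - j u) F(y, -u) ≡ -C_{d+1} ≡ (y - j v) F(y, -v)` modulo `Q_e(y)`. Eliminating `C_{d+1}`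
gives a polynomial of degree `e + 2` divisible by the monic `Q_e` of degree `e + 1`, so the
quotient is linear; its leading coefficient is `(v - u)` times the wanted coefficient of
`x^e z`, and its values at `j u` and `j v` are read off from `C_{d+1} / Q_e(j u)` and
`C_{d+1} / Q_e(j v)`, which are the two products whose difference defines `∂`.
-/

open Polynomial Finset

section LinearQuotient

variable {R : Type*} [CommRing R]

lemma exists_eq_mul_linear_of_dvd {Q L : R[X]} {n : ℕ} (hQ : Q.Monic) (hQn : Q.natDegree = n + 1)
    (hL : L.natDegree ≤ n + 2) (hdvd : Q ∣ L) :
    ∃ r : R, L = Q * (C (L.coeff (n + 2)) * X + C r) := by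
  obtain ⟨h, rfl⟩ := hdvd
  have hh : h.natDegree ≤ 1 := by
    rcases eq_or_ne h 0 with rfl | h0
    · simp
    · rw [hQ.natDegree_mul' h0, hQn] at hL
      omega
  refine ⟨h.coeff 0, ?_⟩
  have hlead : (Q * h).coeff (n + 2) = h.coeff 1 := by
    rw [show n + 2 = (n + 1) + 1 by rfl, coeff_mul_add_eq_of_natDegree_le hQn.le hh, ← hQn,
      hQ.coeff_natDegree, one_mul]
  rw [hlead, ← eq_X_add_C_of_natDegree_le_one hh]

/-- Eliminating `c` between the two congruences leaves a multiple of `Q` of degree `n + 2`; the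
quotient is linear, and its values at `a`, `b` and its leading coefficient give the identity. -/
lemma eval_mul_eval_mul_coeff_sub [IsDomain R] {Q A B : R[X]} {n : ℕ} {a b c : R}
    (hQ : Q.Monic) (hQn : Q.natDegree = n + 1) (hA : A.natDegree ≤ n) (hB : B.natDegree ≤ n)
    (hab : a ≠ b) (hAQ : Q ∣ (X - C a) * A + C c) (hBQ : Q ∣ (X - C b) * B + C c) :
    Q.eval a * Q.eval b * (A - B).coeff n = c * (Q.eval b - Q.eval a) := by
  obtain ⟨L, hL⟩ : ∃ L, L = (X - C a) * (X - C b) * (A - B) + C (c * (a - b)) := ⟨_, rfl⟩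
  have hdvd : Q ∣ L := by
    have : L = (X - C b) * ((X - C a) * A + C c) - (X - C a) * ((X - C b) * B + C c) := by
      rw [hL, C_mul, C_sub]
      ring
    rw [this]
    exact dvd_sub (hAQ.mul_left _) (hBQ.mul_left _)
  have hmonic : ((X - C a) * (X - C b)).Monic := (monic_X_sub_C a).mul (monic_X_sub_C b)
  have hdeg2 : ((X - C a) * (X - C b)).natDegree = 2 := by
    rw [(monic_X_sub_C a).natDegree_mul (monic_X_sub_C b), natDegree_X_sub_C, natDegree_X_sub_C]
  have hAB : (A - B).natDegree ≤ n := (natDegree_sub_le _ _).trans (max_le hA hB)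
  have hLdeg : L.natDegree ≤ n + 2 := by
    rw [hL]
    refine (natDegree_add_le _ _).trans (max_le ?_ ((natDegree_C _).le.trans (Nat.zero_le _)))
    exact (natDegree_mul_le_of_le hdeg2.le hAB).trans (by omega)
  have hLcoeff : L.coeff (n + 2) = (A - B).coeff n := by
    rw [hL, coeff_add, coeff_C, if_neg (by omega), add_zero, add_comm n,
      coeff_mul_add_eq_of_natDegree_le hdeg2.le hAB, ← hdeg2, hmonic.coeff_natDegree, one_mul]
  obtain ⟨r, hr⟩ := exists_eq_mul_linear_of_dvd hQ hQn hLdeg hdvd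
  rw [hLcoeff] at hr
  have hra := congrArg (eval a) hr
  have hrb := congrArg (eval b) hr
  simp only [hL, eval_add, eval_mul, eval_sub, eval_X, eval_C, sub_self, zero_mul, mul_zero,
    zero_add] at hra hrb
  apply mul_left_cancel₀ (sub_ne_zero.mpr hab)
  linear_combination eval a Q * hrb - eval b Q * hra

end LinearQuotient

section EvalZ

variable {R : Type*} [CommSemiring R]

/-- Specialisation `z ↦ w` of `R[x, z]` (with `x = X 0`, `z = X 1`) into `R[x]`. -/
noncomputable def evalZ (w : R) : MvPolynomial (Fin 2) R →ₐ[R] R[X] :=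
  MvPolynomial.aeval ![X, C w]

lemma evalZ_monomial (w : R) (m : Fin 2 →₀ ℕ) (c : R) :
    evalZ w (MvPolynomial.monomial m c) = monomial (m 0) (c * w ^ m 1) := by
  rw [evalZ, MvPolynomial.aeval_monomial, Finsupp.prod_fintype _ _ fun _ => pow_zero _,
    Fin.prod_univ_two]
  simp only [Matrix.cons_val_zero, Matrix.cons_val_one]
  rw [algebraMap_eq, ← C_pow, ← C_mul_X_pow_eq_monomial, C_mul]
  ring

lemma natDegree_evalZ_le (w : R) (F : MvPolynomial (Fin 2) R) :
    (evalZ w F).natDegree ≤ F.degreeOf 0 := by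
  conv_lhs => rw [F.as_sum, map_sum]
  refine natDegree_sum_le_of_forall_le _ _ fun m hm => ?_
  rw [evalZ_monomial]
  exact (natDegree_monomial_le _).trans (MvPolynomial.monomial_le_degreeOf 0 hm)

lemma coeff_evalZ (w : R) {F : MvPolynomial (Fin 2) R} (hF : F.degreeOf 1 ≤ 1) (n : ℕ) :
    (evalZ w F).coeff n =
      F.coeff (Finsupp.single 0 n) + w * F.coeff (Finsupp.single 0 n + Finsupp.single 1 1) := by
  classical
  have hsum : (evalZ w F).coeff n =
      ∑ m ∈ F.support, if m 0 = n then F.coeff m * w ^ m 1 else 0 := by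
    conv_lhs => rw [F.as_sum, map_sum]
    simp only [finsetSum_coeff, evalZ_monomial, coeff_monomial]
  rw [hsum, sum_eq_add (Finsupp.single 0 n) (Finsupp.single 0 n + Finsupp.single 1 1)]
  · simp [mul_comm]
  · intro h
    simpa using congrArg (· 1) h
  · rintro m hm ⟨h0, h1⟩
    refine if_neg fun hmn => ?_
    have hm1 : m 1 ≤ 1 := (MvPolynomial.monomial_le_degreeOf 1 hm).trans hF
    interval_cases hz : m 1
    · exact h0 (Finsupp.ext fun i => by fin_cases i <;> simp [hmn, hz])
    · exact h1 (Finsupp.ext fun i => by fin_cases i <;> simp [hmn, hz])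
  all_goals intro h; simp [MvPolynomial.notMem_support_iff.mp h]

end EvalZ

namespace KirwanFormula

def weight (d m : ℕ) : R2 := (m : R2) * uu + ((d - m : ℕ) : R2) * vv

lemma weight_ne_zero {d : ℕ} (hd : d ≠ 0) (m : ℕ) : weight d m ≠ 0 := by
  intro h
  have := congrArg (MvPolynomial.eval fun _ => (1 : ℚ)) h
  simp only [weight, uu, vv, map_add, map_mul, map_natCast, MvPolynomial.eval_X, mul_one,
    map_zero] at this
  norm_cast at this
  omega

lemma uu_sub_vv_ne_zero : uu - vv ≠ 0 :=
  sub_ne_zero.mpr (MvPolynomial.X_injective.ne (by decide))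

lemma Qp_eq_prod (k : ℕ) : Qp k = ∏ m ∈ range (k + 1), (X + C (weight k m)) := rfl

lemma Cdtop_eq_prod (d : ℕ) : Cdtop d = ∏ m ∈ range (d + 1), weight d m := rfl

lemma monic_Qp (k : ℕ) : (Qp k).Monic :=
  monic_prod_of_monic _ _ fun _ _ => monic_X_add_C _

lemma natDegree_Qp (k : ℕ) : (Qp k).natDegree = k + 1 := by
  rw [Qp_eq_prod, natDegree_prod_of_monic _ _ fun _ _ => monic_X_add_C _]
  simp

lemma eval_Qp (k : ℕ) (t : R2) : (Qp k).eval t = ∏ m ∈ range (k + 1), (t + weight k m) := by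
  simp [Qp_eq_prod, eval_prod]

lemma Qp_comp_X_sub_C (k : ℕ) (t : R2) :
    (Qp k).comp (X - C t) = ∏ m ∈ range (k + 1), (X + C (weight k m - t)) := by
  rw [Qp_eq_prod, Polynomial.prod_comp]
  refine prod_congr rfl fun m _ => ?_
  simp only [add_comp, X_comp, C_comp, C_sub]
  ring

lemma swapUV_swapUV (P : R2) : swapUV (swapUV P) = P := by
  rw [swapUV, swapUV, MvPolynomial.rename_rename]
  convert MvPolynomial.rename_id_apply P
  exact funext fun i => Equiv.swap_apply_self _ _ _

lemma swapUV_prod_weight_eq (d j : ℕ) :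
    swapUV (∏ m ∈ range j, weight d m) =
      ∏ l ∈ range j, ((l : R2) * vv + ((d - l : ℕ) : R2) * uu) := by
  rw [swapUV, map_prod]
  refine prod_congr rfl fun m _ => ?_
  simp [weight, uu, vv]

section

variable {d e j : ℕ} (hd : d = e + j)
include hd

lemma weight_add_left (i : ℕ) : weight d (j + i) = j * uu + weight e i := by
  rw [weight, weight, show d - (j + i) = e - i by omega]
  push_cast
  ring

lemma weight_of_le {i : ℕ} (hi : i ≤ e) : weight d i = j * vv + weight e i := by
  rw [weight, weight, show d - i = (e - i) + j by omega]
  push_cast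
  ring

lemma Qp_dvd_comp_X_sub_C_uu : Qp e ∣ (Qp d).comp (X - C (j * uu)) := by
  have hQe : ∏ i ∈ range (e + 1), (X + C (weight d (j + i) - j * uu)) = Qp e :=
    (prod_congr rfl fun i _ => by rw [weight_add_left hd, add_sub_cancel_left]).trans
      (Qp_eq_prod e).symm
  rw [Qp_comp_X_sub_C, show d + 1 = j + (e + 1) by omega, prod_range_add, hQe]
  exact dvd_mul_left _ _

lemma Qp_dvd_comp_X_sub_C_vv : Qp e ∣ (Qp d).comp (X - C (j * vv)) := by
  have hQe : ∏ i ∈ range (e + 1), (X + C (weight d i - j * vv)) = Qp e :=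
    (prod_congr rfl fun i hi => by
      rw [weight_of_le hd (Nat.lt_succ_iff.mp (mem_range.mp hi)), add_sub_cancel_left]).trans
      (Qp_eq_prod e).symm
  rw [Qp_comp_X_sub_C, show d + 1 = (e + 1) + j by omega, prod_range_add, hQe]
  exact dvd_mul_right _ _

lemma eval_Qp_uu : (Qp e).eval (j * uu) = ∏ i ∈ range (e + 1), weight d (j + i) :=
  (eval_Qp e _).trans (prod_congr rfl fun i _ => (weight_add_left hd i).symm)

lemma eval_Qp_vv : (Qp e).eval (j * vv) = ∏ i ∈ range (e + 1), weight d i :=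
  (eval_Qp e _).trans (prod_congr rfl fun _ hi =>
    (weight_of_le hd (Nat.lt_succ_iff.mp (mem_range.mp hi))).symm)

lemma Cdtop_eq_mul_eval_Qp_uu :
    Cdtop d = (∏ m ∈ range j, weight d m) * (Qp e).eval (j * uu) := by
  rw [eval_Qp_uu hd, Cdtop_eq_prod, show d + 1 = j + (e + 1) by omega, prod_range_add]

lemma Cdtop_eq_eval_Qp_vv_mul :
    Cdtop d = (Qp e).eval (j * vv) * ∏ i ∈ range j, weight d (e + 1 + i) := by
  rw [eval_Qp_vv hd, Cdtop_eq_prod, show d + 1 = (e + 1) + j by omega, prod_range_add]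

lemma swapUV_prod_weight :
    swapUV (∏ m ∈ range j, weight d m) = ∏ i ∈ range j, weight d (e + 1 + i) := by
  rw [swapUV, map_prod, ← prod_range_reflect (fun i => weight d (e + 1 + i))]
  refine prod_congr rfl fun m hm => ?_
  have hmj := mem_range.mp hm
  simp only [weight, uu, vv, map_add, map_mul, map_natCast, MvPolynomial.rename_X,
    Equiv.swap_apply_left, Equiv.swap_apply_right]
  rw [show e + 1 + (j - 1 - m) = d - m by omega, show d - (d - m) = m by omega]
  ring

end

lemma evalZ_Qm_zero (w : R2) (k : ℕ) : evalZ w (Qm 2 k 0) = Qp k := by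
  simp [Qm, Qp, evalZ, algebraMap_eq]

lemma evalZ_Qm_one (w : R2) (k : ℕ) : evalZ w (Qm 2 k 1) = C ((Qp k).eval w) := by
  simp [Qm, Qp, evalZ, algebraMap_eq, eval_prod]

lemma eval_Qp_neg_weight {k m : ℕ} (hm : m ≤ k) : (Qp k).eval (-weight k m) = 0 := by
  rw [eval_Qp]
  exact prod_eq_zero (mem_range.mpr (Nat.lt_succ_of_le hm)) (neg_add_cancel _)

lemma evalZ_neg_X_add_mul_X (w : R2) (j : ℕ) :
    evalZ (-w) (MvPolynomial.X 0 + (j : MvPolynomial (Fin 2) R2) * MvPolynomial.X 1) =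
      X - C (j * w) := by
  simp [evalZ, C_mul]
  ring

lemma Qp_dvd_of_mem_span {d e j : ℕ} {q : R2[X]} (hq : X * q = Qp d - C (Cdtop d))
    {F : MvPolynomial (Fin 2) R2}
    (hrep : aeval (MvPolynomial.X 0 + (j : MvPolynomial (Fin 2) R2) * MvPolynomial.X 1) q - F
      ∈ Ideal.span {Qm 2 e 0, Qm 2 1 1})
    {w : R2} (hw : (Qp 1).eval (-w) = 0) (hQd : Qp e ∣ (Qp d).comp (X - C (j * w))) :
    Qp e ∣ (X - C (j * w)) * evalZ (-w) F + C (Cdtop d) := by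
  obtain ⟨a, b, hab⟩ := Ideal.mem_span_pair.mp hrep
  have hqF : q.comp (X - C (j * w)) - evalZ (-w) F = evalZ (-w) a * Qp e := by
    have := congrArg (evalZ (-w)) hab
    rwa [map_add, map_mul, map_mul, evalZ_Qm_zero, evalZ_Qm_one, hw, map_zero, mul_zero,
      add_zero, map_sub, ← aeval_algHom_apply, evalZ_neg_X_add_mul_X, ← comp_eq_aeval,
      eq_comm] at this
  have hqd : (X - C (j * w)) * q.comp (X - C (j * w)) =
      (Qp d).comp (X - C (j * w)) - C (Cdtop d) := by
    have := congrArg (fun p => p.comp (X - C (j * w))) hq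
    simp only [mul_comp, sub_comp, X_comp, C_comp] at this
    exact this
  have : (X - C (j * w)) * evalZ (-w) F + C (Cdtop d) =
      (Qp d).comp (X - C (j * w)) - (X - C (j * w)) * (evalZ (-w) a * Qp e) := by
    rw [← hqF]
    linear_combination hqd
  rw [this]
  exact dvd_sub hQd (dvd_mul_of_dvd_right (dvd_mul_left _ _) _)

end KirwanFormula

open KirwanFormula in
theorem stmt6_general (e j : ℕ) (hj : 2 ≤ j) (d : ℕ) (hd : d = e + j)
    (q : Polynomial R2) (hq : Polynomial.X * q = Qp d - Polynomial.C (Cdtop d))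
    (F : MvPolynomial (Fin 2) R2)
    (hx : F.degreeOf 0 ≤ e) (hz : F.degreeOf 1 ≤ 1)
    (hrep : Polynomial.aeval
          (MvPolynomial.X 0 + ((j : ℕ) : MvPolynomial (Fin 2) R2) * MvPolynomial.X 1) q - F
        ∈ Ideal.span {Qm 2 e 0, Qm 2 1 1})
    (D : R2)
    (hD : (uu - vv) * D =
        (∏ l ∈ Finset.range j, ((l : R2) * vv + ((d - l : ℕ) : R2) * uu)) -
          swapUV (∏ l ∈ Finset.range j, ((l : R2) * vv + ((d - l : ℕ) : R2) * uu))) :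
    MvPolynomial.coeff (Finsupp.single (0 : Fin 2) e + Finsupp.single 1 1) F = D := by
  have hd0 : d ≠ 0 := by omega
  have hu := Qp_dvd_of_mem_span (w := uu) hq hrep
    (by simpa [weight] using eval_Qp_neg_weight (k := 1) le_rfl) (Qp_dvd_comp_X_sub_C_uu hd)
  have hv := Qp_dvd_of_mem_span (w := vv) hq hrep
    (by simpa [weight] using eval_Qp_neg_weight (k := 1) zero_le_one) (Qp_dvd_comp_X_sub_C_vv hd)
  have hjuv : (j : R2) * uu ≠ j * vv :=
    (mul_right_injective₀ (Nat.cast_ne_zero.mpr (by omega))).ne (sub_ne_zero.mp uu_sub_vv_ne_zero)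
  have key := eval_mul_eval_mul_coeff_sub (monic_Qp e) (natDegree_Qp e)
    ((natDegree_evalZ_le _ F).trans hx) ((natDegree_evalZ_le _ F).trans hx) hjuv hu hv
  rw [coeff_sub, coeff_evalZ _ hz, coeff_evalZ _ hz] at key
  rw [← swapUV_prod_weight_eq, swapUV_swapUV, swapUV_prod_weight hd] at hD
  have hQu : (Qp e).eval (j * uu) ≠ 0 := by
    rw [eval_Qp_uu hd]
    exact prod_ne_zero_iff.mpr fun _ _ => weight_ne_zero hd0 _
  have hQv : (Qp e).eval (j * vv) ≠ 0 := by
    rw [eval_Qp_vv hd]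
    exact prod_ne_zero_iff.mpr fun _ _ => weight_ne_zero hd0 _
  apply mul_left_cancel₀ (mul_ne_zero (mul_ne_zero hQu hQv) uu_sub_vv_ne_zero)
  linear_combination -key - (Qp e).eval (j * uu) * (Qp e).eval (j * vv) * hD
    - (Qp e).eval (j * vv) * Cdtop_eq_mul_eval_Qp_uu hd
    + (Qp e).eval (j * uu) * Cdtop_eq_eval_Qp_vv_mul hd

/-- Example 3.7(1) (Kirwan's formula): the Thom polynomial of `λ = (1^e, j)`, `d = e + j`,
is the divided difference `∂(∏_{l=0}^{j−1} (l·v + (d−l)·u))`.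
Variables: `x = X 0`, `z = X 1` in `R[x,z]`. -/
theorem stmt6 (e j : ℕ) (he : 1 ≤ e) (hj : 2 ≤ j) (d : ℕ) (hd : d = e + j)
    (q : Polynomial R2) (hq : Polynomial.X * q = Qp d - Polynomial.C (Cdtop d))
    (F : MvPolynomial (Fin 2) R2)
    (hx : F.degreeOf 0 ≤ e) (hz : F.degreeOf 1 ≤ 1)
    (hrep : Polynomial.aeval
          (MvPolynomial.X 0 + ((j : ℕ) : MvPolynomial (Fin 2) R2) * MvPolynomial.X 1) q - F
        ∈ Ideal.span {Qm 2 e 0, Qm 2 1 1})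
    (D : R2)
    (hD : (uu - vv) * D =
        (∏ l ∈ Finset.range j, ((l : R2) * vv + ((d - l : ℕ) : R2) * uu)) -
          swapUV (∏ l ∈ Finset.range j, ((l : R2) * vv + ((d - l : ℕ) : R2) * uu))) :
    MvPolynomial.coeff (Finsupp.single (0 : Fin 2) e + Finsupp.single 1 1) F = D :=
  stmt6_general e j hj d hd q hq F hx hz hrep D hD
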